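/- Let 0 < ε < 1 be fixed. There exists a constant A ≥ 1 such that for all a, b ∈ D with A·e^{−R} ≤ dist_P(a,b) ≤ 1, and for all automorphisms τ_a, τ_b of D with τ_a(0) = a and τ_b(0) = b, there exists ξ ∈ D_R with dist_P(τ_a(ξ), τ_b(ξ)) > ε. -/

import Mathlib

/-!
Write `τ_a = mobius e₁ w₁` and `τ_b = mobius e₂ w₂`. Clearing denominators,
`(τ_a x - τ_b x)(1 - w̄₁ x)(1 - w̄₂ x)` is a quadratic polynomial in `x` with constant term
`a - b`, so at one of the four points `ξ = ζ r` with `ζ⁴ = 1` its modulus is at least `|a - b|`.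
Together with `(1 - |τ x|²) |1 - w̄ x|² = (1 - |w|²)(1 - |x|²)` and
`sinh² dist_P(z, w) = |z - w|² / ((1 - |z|²)(1 - |w|²))`, this gives
`ρ(a, b) ≤ (1 - r²) sinh dist_P(τ_a ξ, τ_b ξ)` for the pseudo-hyperbolic distance `ρ`.
Taking `1 - r² = 4 e^{-R}` keeps `ξ` in `D_R`, and `ρ(a, b) ≥ dist_P(a, b) / 2 ≥ 8 e^{-R}` for
`A = 16`, so `sinh dist_P(τ_a ξ, τ_b ξ) ≥ 2 > sinh ε`.
-/

open Set Complex

noncomputable section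

/-- The inverse hyperbolic tangent `tanh⁻¹ x = ½ log((1+x)/(1-x))`. -/
def arTanh (x : ℝ) : ℝ := Real.log ((1 + x) / (1 - x)) / 2

/-- The Poincaré distance on the unit disc:
`dist_P(w₁,w₂) = tanh⁻¹ (|w₁ - w₂| / |1 - w̄₁ w₂|)`. -/
def distP (w₁ w₂ : ℂ) : ℝ :=
  arTanh (‖w₁ - w₂‖ / ‖1 - (starRingEnd ℂ) w₁ * w₂‖)

/-- `D_R`, the disc of center `0` and of hyperbolic radius `R`, i.e. `D_R = r·D`
with `R = log((1+r)/(1-r))`, that is, `r = tanh (R/2)`. -/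
def hyperDisc (R : ℝ) : Set ℂ := {z : ℂ | ‖z‖ < Real.tanh (R / 2)}

end

/-- An automorphism of the unit disc: a rotated Möbius transformation
`z ↦ e^{iθ} (z - w)/(1 - w̄ z)` with `|w| < 1`. -/
def IsDiscAut (f : ℂ → ℂ) : Prop :=
  ∃ (θ : ℝ) (w : ℂ), ‖w‖ < 1 ∧
    ∀ z : ℂ, f z = Complex.exp (θ * Complex.I) * (z - w) / (1 - (starRingEnd ℂ) w * z)

open ComplexConjugate

lemma arTanh_eq_artanh {x : ℝ} (hx : x ∈ Icc (-1) 1) : arTanh x = Real.artanh x := by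
  rw [Real.artanh_eq_half_log hx, arTanh]
  ring

lemma Real.artanh_le_two_mul {q : ℝ} (hq0 : 0 ≤ q) (hq1 : q < 1) (h : Real.artanh q ≤ 1) :
    Real.artanh q ≤ 2 * q := by
  have hlog : Real.artanh q * (1 - q) ≤ q := by
    have hpos : 0 < (1 + q) / (1 - q) := div_pos (by linarith) (by linarith)
    have hsub : (1 + q) / (1 - q) - 1 = 2 * q / (1 - q) := by
      field_simp [(by linarith : (1 : ℝ) - q ≠ 0)]
      ring
    have := Real.log_le_sub_one_of_pos hpos
    rw [hsub, le_div_iff₀ (by linarith)] at this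
    rw [Real.artanh_eq_half_log ⟨by linarith, hq1.le⟩]
    linarith
  nlinarith

lemma normSq_one_sub_conj_mul (z w : ℂ) :
    normSq (1 - conj z * w) = normSq (z - w) + (1 - normSq z) * (1 - normSq w) := by
  simp only [normSq_apply, sub_re, sub_im, mul_re, mul_im, one_re, one_im, conj_re, conj_im]
  ring

lemma one_sub_normSq_pos {z : ℂ} (hz : ‖z‖ < 1) : 0 < 1 - normSq z := by
  rw [normSq_eq_norm_sq]; nlinarith [norm_nonneg z]

lemma normSq_sub_lt_normSq_one_sub_conj_mul {z w : ℂ} (hz : ‖z‖ < 1) (hw : ‖w‖ < 1) :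
    normSq (z - w) < normSq (1 - conj z * w) := by
  rw [normSq_one_sub_conj_mul]
  nlinarith [mul_pos (one_sub_normSq_pos hz) (one_sub_normSq_pos hw)]

lemma norm_sub_lt_norm_one_sub_conj_mul {z w : ℂ} (hz : ‖z‖ < 1) (hw : ‖w‖ < 1) :
    ‖z - w‖ < ‖1 - conj z * w‖ := by
  have := normSq_sub_lt_normSq_one_sub_conj_mul hz hw
  rw [normSq_eq_norm_sq, normSq_eq_norm_sq] at this
  exact lt_of_pow_lt_pow_left₀ 2 (norm_nonneg _) this

lemma one_sub_conj_mul_ne_zero {z w : ℂ} (hz : ‖z‖ < 1) (hw : ‖w‖ < 1) :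
    1 - conj z * w ≠ 0 :=
  norm_pos_iff.mp ((norm_nonneg _).trans_lt (norm_sub_lt_norm_one_sub_conj_mul hz hw))

noncomputable def pseudoDist (z w : ℂ) : ℝ := ‖z - w‖ / ‖1 - conj z * w‖

lemma pseudoDist_nonneg (z w : ℂ) : 0 ≤ pseudoDist z w := by
  unfold pseudoDist; positivity

lemma pseudoDist_lt_one {z w : ℂ} (hz : ‖z‖ < 1) (hw : ‖w‖ < 1) : pseudoDist z w < 1 :=
  (div_lt_one ((norm_nonneg _).trans_lt (norm_sub_lt_norm_one_sub_conj_mul hz hw))).mpr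
    (norm_sub_lt_norm_one_sub_conj_mul hz hw)

lemma distP_eq_artanh_pseudoDist {z w : ℂ} (hz : ‖z‖ < 1) (hw : ‖w‖ < 1) :
    distP z w = Real.artanh (pseudoDist z w) :=
  arTanh_eq_artanh ⟨(neg_one_lt_zero.trans_le (pseudoDist_nonneg z w)).le,
    (pseudoDist_lt_one hz hw).le⟩

lemma pseudoDist_sq_mul_le (z w : ℂ) :
    pseudoDist z w ^ 2 * ((1 - normSq z) * (1 - normSq w)) ≤ normSq (z - w) := by
  have hM : (1 - normSq z) * (1 - normSq w) ≤ normSq (1 - conj z * w) := by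
    rw [normSq_one_sub_conj_mul]; linarith [normSq_nonneg (z - w)]
  rw [pseudoDist, div_pow, ← normSq_eq_norm_sq, ← normSq_eq_norm_sq]
  rcases (normSq_nonneg (1 - conj z * w)).eq_or_lt with h | h
  · simpa [← h] using normSq_nonneg _
  · calc normSq (z - w) / normSq (1 - conj z * w) * ((1 - normSq z) * (1 - normSq w))
        ≤ normSq (z - w) / normSq (1 - conj z * w) * normSq (1 - conj z * w) := by
          gcongr; exact div_nonneg (normSq_nonneg _) h.le
      _ = normSq (z - w) := div_mul_cancel₀ _ h.ne'

lemma sinh_distP_sq_mul {z w : ℂ} (hz : ‖z‖ < 1) (hw : ‖w‖ < 1) :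
    Real.sinh (distP z w) ^ 2 * ((1 - normSq z) * (1 - normSq w)) = normSq (z - w) := by
  have hρ0 := pseudoDist_nonneg z w
  have hρ1 := pseudoDist_lt_one hz hw
  have hD := normSq_one_sub_conj_mul z w
  have hDpos : 0 < normSq (1 - conj z * w) := normSq_pos.mpr (one_sub_conj_mul_ne_zero hz hw)
  have hρsq : pseudoDist z w ^ 2 = normSq (z - w) / normSq (1 - conj z * w) := by
    rw [pseudoDist, div_pow, ← normSq_eq_norm_sq, ← normSq_eq_norm_sq]
  rw [distP_eq_artanh_pseudoDist hz hw, Real.sinh_artanh ⟨by linarith, hρ1⟩, div_pow,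
    Real.sq_sqrt (by nlinarith), hρsq]
  have hM := mul_pos (one_sub_normSq_pos hz) (one_sub_normSq_pos hw)
  rw [hD] at hDpos ⊢
  generalize normSq (z - w) = N at hDpos ⊢
  generalize (1 - normSq z) * (1 - normSq w) = M at hM hDpos ⊢
  have h1 : 1 - N / (N + M) = M / (N + M) := by field_simp; ring
  rw [h1, div_div_div_cancel_right₀ hDpos.ne', div_mul_cancel₀ _ hM.ne']

noncomputable def mobius (e w z : ℂ) : ℂ := e * (z - w) / (1 - conj w * z)

lemma IsDiscAut.exists_eq_mobius {f : ℂ → ℂ} (hf : IsDiscAut f) :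
    ∃ e w, ‖e‖ = 1 ∧ ‖w‖ < 1 ∧ f = mobius e w := by
  obtain ⟨θ, w, hw, hf⟩ := hf
  exact ⟨_, w, norm_exp_ofReal_mul_I θ, hw, funext hf⟩

lemma mobius_zero (e w : ℂ) : mobius e w 0 = -(e * w) := by simp [mobius]

lemma normSq_mobius_zero {e : ℂ} (he : ‖e‖ = 1) (w : ℂ) : normSq (mobius e w 0) = normSq w := by
  rw [mobius_zero, normSq_neg, normSq_mul, normSq_eq_norm_sq e, he, one_pow, one_mul]

lemma one_sub_normSq_mobius_mul {e w z : ℂ} (he : ‖e‖ = 1) (h : 1 - conj w * z ≠ 0) :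
    (1 - normSq (mobius e w z)) * normSq (1 - conj w * z) = (1 - normSq w) * (1 - normSq z) := by
  have hD : normSq (1 - conj w * z) ≠ 0 := normSq_eq_zero.not.mpr h
  rw [mobius, normSq_div, normSq_mul, normSq_eq_norm_sq e, he, one_pow, one_mul, sub_mul,
    div_mul_cancel₀ _ hD, normSq_one_sub_conj_mul, ← normSq_neg (w - z), neg_sub]
  ring

lemma norm_mobius_lt_one {e w z : ℂ} (he : ‖e‖ = 1) (hw : ‖w‖ < 1) (hz : ‖z‖ < 1) :
    ‖mobius e w z‖ < 1 := by
  have h := one_sub_normSq_mobius_mul he (one_sub_conj_mul_ne_zero hw hz)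
  have hD : 0 < normSq (1 - conj w * z) := normSq_pos.mpr (one_sub_conj_mul_ne_zero hw hz)
  have hpos : 0 < 1 - normSq (mobius e w z) := by
    refine pos_of_mul_pos_left ?_ hD.le
    rw [h]; exact mul_pos (one_sub_normSq_pos hw) (one_sub_normSq_pos hz)
  rw [normSq_eq_norm_sq] at hpos
  nlinarith [norm_nonneg (mobius e w z)]

lemma mobius_mul_one_sub (e w : ℂ) {z : ℂ} (h : 1 - conj w * z ≠ 0) :
    mobius e w z * (1 - conj w * z) = e * (z - w) :=
  div_mul_cancel₀ _ h

lemma mobius_sub_mobius_mul {e₁ e₂ w₁ w₂ x : ℂ} (h₁ : 1 - conj w₁ * x ≠ 0)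
    (h₂ : 1 - conj w₂ * x ≠ 0) :
    (mobius e₁ w₁ x - mobius e₂ w₂ x) * (1 - conj w₁ * x) * (1 - conj w₂ * x) =
      (e₂ * conj w₁ - e₁ * conj w₂) * x ^ 2
        + (e₁ - e₂ + e₁ * w₁ * conj w₂ - e₂ * conj w₁ * w₂) * x
        + (mobius e₁ w₁ 0 - mobius e₂ w₂ 0) := by
  rw [mobius_zero, mobius_zero]
  linear_combination (1 - conj w₂ * x) * mobius_mul_one_sub e₁ w₁ h₁
    - (1 - conj w₁ * x) * mobius_mul_one_sub e₂ w₂ h₂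

lemma exists_pow_four_eq_one_norm_le (c₂ c₁ c₀ ξ : ℂ) :
    ∃ ζ : ℂ, ζ ^ 4 = 1 ∧ ‖c₀‖ ≤ ‖c₂ * (ζ * ξ) ^ 2 + c₁ * (ζ * ξ) + c₀‖ := by
  set p : ℂ → ℂ := fun ζ ↦ c₂ * (ζ * ξ) ^ 2 + c₁ * (ζ * ξ) + c₀
  by_contra! h
  have hsum : p 1 + p (-1) + p I + p (-I) = 4 * c₀ := by
    simp only [p]
    linear_combination 2 * c₂ * ξ ^ 2 * I_sq
  have hle : ‖p 1 + p (-1) + p I + p (-I)‖ ≤ ‖p 1‖ + ‖p (-1)‖ + ‖p I‖ + ‖p (-I)‖ :=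
    norm_add₄_le
  rw [hsum, norm_mul, RCLike.norm_ofNat] at hle
  linarith [h 1 (one_pow 4), h (-1) (by norm_num), h I I_pow_four,
    h (-I) (by rw [neg_pow, I_pow_four]; norm_num)]

lemma sqrt_one_sub_four_mul_exp_neg_lt_tanh {R : ℝ} (hR : 0 < R) :
    √(1 - 4 * Real.exp (-R)) < Real.tanh (R / 2) := by
  have hs : 1 < Real.exp (R / 2) := Real.one_lt_exp_iff.mpr (by linarith)
  have hu : 0 < Real.exp (-(R / 2)) := Real.exp_pos _
  have hsu : Real.exp (R / 2) * Real.exp (-(R / 2)) = 1 := by rw [← Real.exp_add]; simp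
  have hR' : Real.exp (-R) = Real.exp (-(R / 2)) ^ 2 := by rw [← Real.exp_nat_mul]; ring_nf
  have htanh : 0 < Real.tanh (R / 2) := by
    rw [Real.tanh_eq, div_pos_iff]; left; constructor <;> nlinarith
  rw [Real.sqrt_lt' htanh, Real.tanh_eq, div_pow, lt_div_iff₀ (by positivity), hR']
  nlinarith [sq_nonneg (Real.exp (-(R / 2))), mul_pos hu hu]

lemma pseudoDist_le_mul_sinh_distP_mobius {e₁ e₂ w₁ w₂ x : ℂ} (he₁ : ‖e₁‖ = 1) (he₂ : ‖e₂‖ = 1)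
    (hw₁ : ‖w₁‖ < 1) (hw₂ : ‖w₂‖ < 1) (hx : ‖x‖ < 1)
    (hF : ‖mobius e₁ w₁ 0 - mobius e₂ w₂ 0‖ ≤
      ‖(mobius e₁ w₁ x - mobius e₂ w₂ x) * (1 - conj w₁ * x) * (1 - conj w₂ * x)‖) :
    pseudoDist (mobius e₁ w₁ 0) (mobius e₂ w₂ 0) ≤
      (1 - ‖x‖ ^ 2) * Real.sinh (distP (mobius e₁ w₁ x) (mobius e₂ w₂ x)) := by
  set a := mobius e₁ w₁ 0
  set b := mobius e₂ w₂ 0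
  set z₁ := mobius e₁ w₁ x
  set z₂ := mobius e₂ w₂ x
  set q := pseudoDist a b
  set s := Real.sinh (distP z₁ z₂)
  have hD₁ := one_sub_conj_mul_ne_zero hw₁ hx
  have hD₂ := one_sub_conj_mul_ne_zero hw₂ hx
  set D := normSq (1 - conj w₁ * x) * normSq (1 - conj w₂ * x)
  have hDpos : 0 < D := mul_pos (normSq_pos.mpr hD₁) (normSq_pos.mpr hD₂)
  have hz₁ := norm_mobius_lt_one he₁ hw₁ hx
  have hz₂ := norm_mobius_lt_one he₂ hw₂ hx
  set M := (1 - normSq z₁) * (1 - normSq z₂)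
  have hMpos : 0 < M := mul_pos (one_sub_normSq_pos hz₁) (one_sub_normSq_pos hz₂)
  have hMD : M * D = (1 - normSq w₁) * (1 - normSq w₂) * (1 - normSq x) ^ 2 := by
    linear_combination (1 - normSq z₂) * normSq (1 - conj w₂ * x) *
        one_sub_normSq_mobius_mul he₁ hD₁ +
      (1 - normSq w₁) * (1 - normSq x) * one_sub_normSq_mobius_mul he₂ hD₂
  have hab : q ^ 2 * ((1 - normSq w₁) * (1 - normSq w₂)) ≤ normSq (a - b) := by
    simpa only [a, b, normSq_mobius_zero he₁, normSq_mobius_zero he₂] using pseudoDist_sq_mul_le a b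
  have hF' : normSq (a - b) ≤ normSq (z₁ - z₂) * D := by
    have := pow_le_pow_left₀ (norm_nonneg _) hF 2
    simpa only [Complex.sq_norm, normSq_mul, D, mul_assoc] using this
  have hs : s ^ 2 * M = normSq (z₁ - z₂) := sinh_distP_sq_mul hz₁ hz₂
  have hq_sq : q ^ 2 * (M * D) ≤ ((1 - normSq x) * s) ^ 2 * (M * D) := by
    calc q ^ 2 * (M * D)
        = q ^ 2 * ((1 - normSq w₁) * (1 - normSq w₂)) * (1 - normSq x) ^ 2 := by
          rw [hMD]; ring
      _ ≤ normSq (z₁ - z₂) * D * (1 - normSq x) ^ 2 :=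
          mul_le_mul_of_nonneg_right (hab.trans hF') (sq_nonneg _)
      _ = ((1 - normSq x) * s) ^ 2 * (M * D) := by rw [← hs]; ring
  have hs0 : 0 ≤ s := Real.sinh_nonneg_iff.mpr (by
    rw [distP_eq_artanh_pseudoDist hz₁ hz₂]; exact Real.artanh_nonneg (pseudoDist_nonneg _ _))
  rw [← normSq_eq_norm_sq]
  exact (pow_le_pow_iff_left₀ (pseudoDist_nonneg _ _)
    (mul_nonneg (one_sub_normSq_pos hx).le hs0) two_ne_zero).mp
    (le_of_mul_le_mul_right hq_sq (mul_pos hMpos hDpos))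

lemma exists_pow_four_eq_one_pseudoDist_le_mul_sinh {e₁ e₂ w₁ w₂ ξ : ℂ} (he₁ : ‖e₁‖ = 1)
    (he₂ : ‖e₂‖ = 1) (hw₁ : ‖w₁‖ < 1) (hw₂ : ‖w₂‖ < 1) (hξ : ‖ξ‖ < 1) :
    ∃ ζ : ℂ, ζ ^ 4 = 1 ∧ pseudoDist (mobius e₁ w₁ 0) (mobius e₂ w₂ 0) ≤
      (1 - ‖ξ‖ ^ 2) * Real.sinh (distP (mobius e₁ w₁ (ζ * ξ)) (mobius e₂ w₂ (ζ * ξ))) := by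
  obtain ⟨ζ, hζ, hle⟩ := exists_pow_four_eq_one_norm_le (e₂ * conj w₁ - e₁ * conj w₂)
    (e₁ - e₂ + e₁ * w₁ * conj w₂ - e₂ * conj w₁ * w₂) (mobius e₁ w₁ 0 - mobius e₂ w₂ 0) ξ
  have hnorm : ‖ζ * ξ‖ = ‖ξ‖ := by
    rw [norm_mul, norm_eq_one_of_pow_eq_one hζ four_ne_zero, one_mul]
  refine ⟨ζ, hζ, hnorm ▸ pseudoDist_le_mul_sinh_distP_mobius he₁ he₂ hw₁ hw₂ (hnorm ▸ hξ) ?_⟩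
  rwa [mobius_sub_mobius_mul (one_sub_conj_mul_ne_zero hw₁ (hnorm ▸ hξ))
    (one_sub_conj_mul_ne_zero hw₂ (hnorm ▸ hξ))]

lemma Real.sinh_one_lt_two : Real.sinh 1 < 2 := by
  rw [Real.sinh_eq]
  linarith [Real.exp_one_lt_d9, Real.exp_pos (-1)]

theorem separated_points_separated_automorphisms_general (ε : ℝ) (hε1 : ε < 1) :
    ∃ A : ℝ, 1 ≤ A ∧ ∀ (R : ℝ), 0 < R → ∀ a b : ℂ,
    ‖a‖ < 1 → ‖b‖ < 1 →
    A * Real.exp (-R) ≤ distP a b → distP a b ≤ 1 →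
    ∀ τa τb : ℂ → ℂ, IsDiscAut τa → IsDiscAut τb → τa 0 = a → τb 0 = b →
      ∃ ξ ∈ hyperDisc R, ε < distP (τa ξ) (τb ξ) := by
  refine ⟨16, by norm_num, fun R hR a b ha hb hlow hhigh τa τb hτa hτb ha0 hb0 ↦ ?_⟩
  obtain ⟨e₁, w₁, he₁, hw₁, rfl⟩ := hτa.exists_eq_mobius
  obtain ⟨e₂, w₂, he₂, hw₂, rfl⟩ := hτb.exists_eq_mobius
  subst ha0 hb0
  set δ := Real.exp (-R)
  have hq : 8 * δ ≤ pseudoDist (mobius e₁ w₁ 0) (mobius e₂ w₂ 0) := by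
    rw [distP_eq_artanh_pseudoDist ha hb] at hlow hhigh
    linarith [Real.artanh_le_two_mul (pseudoDist_nonneg _ _) (pseudoDist_lt_one ha hb) hhigh]
  set r := √(1 - 4 * δ)
  have hr : ‖(r : ℂ)‖ ^ 2 = 1 - 4 * δ := by
    rw [norm_real, Real.norm_eq_abs, sq_abs, Real.sq_sqrt (by linarith)]
  have hr1 : ‖(r : ℂ)‖ < 1 := by
    nlinarith [norm_nonneg (r : ℂ), Real.exp_pos (-R)]
  obtain ⟨ζ, hζ, hle⟩ := exists_pow_four_eq_one_pseudoDist_le_mul_sinh he₁ he₂ hw₁ hw₂ hr1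
  refine ⟨ζ * r, ?_, ?_⟩
  · show ‖ζ * r‖ < _
    rw [norm_mul, norm_eq_one_of_pow_eq_one hζ four_ne_zero, one_mul,
      norm_real, Real.norm_of_nonneg (Real.sqrt_nonneg _)]
    exact sqrt_one_sub_four_mul_exp_neg_lt_tanh hR
  · rw [hr] at hle
    rw [← Real.sinh_lt_sinh]
    calc Real.sinh ε < Real.sinh 1 := Real.sinh_lt_sinh.mpr hε1
      _ < 2 := Real.sinh_one_lt_two
      _ ≤ _ := by nlinarith [Real.exp_pos (-R)]

/-- for fixed `0 < ε < 1` there is `A ≥ 1` such that whenever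
`A e^{-R} ≤ dist_P(a,b) ≤ 1`, any automorphisms `τ_a, τ_b` of `D` with
`τ_a(0) = a`, `τ_b(0) = b` satisfy `dist_P(τ_a(ξ), τ_b(ξ)) > ε` for some
`ξ ∈ D_R`. -/
theorem separated_points_separated_automorphisms (ε : ℝ) (hε0 : 0 < ε) (hε1 : ε < 1) :
    ∃ A : ℝ, 1 ≤ A ∧ ∀ (R : ℝ), 0 < R → ∀ a b : ℂ,
    ‖a‖ < 1 → ‖b‖ < 1 →
    A * Real.exp (-R) ≤ distP a b → distP a b ≤ 1 →
    ∀ τa τb : ℂ → ℂ, IsDiscAut τa → IsDiscAut τb → τa 0 = a → τb 0 = b →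
      ∃ ξ ∈ hyperDisc R, ε < distP (τa ξ) (τb ξ) :=
  separated_points_separated_automorphisms_general ε hε1
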